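/- arXiv:1510.04180 — 2 statements merged into one kernel-verified Lean document; each statement's English description precedes it below -/
import Mathlib

section
/- Let l and m be positive integers, and let W be a random variable with the Beta(l, m) density f(x) = ((l+m−1)!/((l−1)!·(m−1)!)) · x^{l−1}(1−x)^{m−1} on [0, 1]. Then E(W · log W) = ((l+m−1)!/((l−1)!·(m−1)!)) · ∫₀¹ x^l (1−x)^{m−1} log x dx = −(l/(l+m)) · (ξ_{l+m} − ξ_l), where ξ_n = Σ_{j=1}^n 1/j is the n-th harmonic number. -/
/-- The `n`-th harmonic number `ξ_n = Σ_{j=1}^n 1/j`. -/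
noncomputable def xi (n : ℕ) : ℝ := ∑ j ∈ Finset.range n, (1 : ℝ) / (j + 1)

/-!
Write `J(n, b) = ∫₀¹ xⁿ (1 - x)ᵇ log x`. Splitting `(1 - x)ᵇ⁺¹ = (1 - x)ᵇ - x (1 - x)ᵇ` gives
`J(n, b + 1) = J(n, b) - J(n + 1, b)`, and `J(n, 0) = -1/(n + 1)²` from the antiderivative
`xⁿ⁺¹ (log x/(n + 1) - 1/(n + 1)²)`, so induction on `b` yields
`J(n, b) = n! b!/(n + b + 1)! · (ξₙ - ξₙ₊ᵦ₊₁)`. The expectation is the Beta normalising constant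
times `J(l, m - 1)`.
-/

open Real intervalIntegral

lemma xi_succ (n : ℕ) : xi (n + 1) = xi n + 1 / ((n : ℝ) + 1) := by
  simp [xi, Finset.sum_range_succ]

lemma intervalIntegrable_pow_mul_one_sub_pow_mul_log (n b : ℕ) :
    IntervalIntegrable (fun x : ℝ => x ^ n * (1 - x) ^ b * log x) MeasureTheory.volume 0 1 :=
  intervalIntegrable_log'.continuousOn_mul (by fun_prop)

lemma integral_pow_mul_log (n : ℕ) :
    ∫ x in (0:ℝ)..1, x ^ n * log x = -1 / ((n : ℝ) + 1) ^ 2 := by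
  set F : ℝ → ℝ := fun x => x ^ (n + 1) * log x / (n + 1) - x ^ (n + 1) / (n + 1) ^ 2
  have hF : Continuous F := by
    have hF_eq : F = fun x => x ^ n * (x * log x) / (n + 1) - x ^ (n + 1) / (n + 1) ^ 2 := by
      ext x; simp only [F]; ring
    have := continuous_mul_log
    rw [hF_eq]
    fun_prop
  have hF' : ∀ x ∈ Set.Ioo (0:ℝ) 1, HasDerivAt F (x ^ n * log x) x := by
    intro x hx
    have h := (((hasDerivAt_pow (n + 1) x).mul (hasDerivAt_log hx.1.ne')).div_const
      ((n : ℝ) + 1)).sub ((hasDerivAt_pow (n + 1) x).div_const (((n : ℝ) + 1) ^ 2))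
    refine h.congr_deriv ?_
    field_simp [hx.1.ne']
    push_cast
    ring
  have h := integral_eq_sub_of_hasDerivAt_of_le zero_le_one hF.continuousOn hF'
    (by simpa using intervalIntegrable_pow_mul_one_sub_pow_mul_log n 0)
  simp [h, F]
  ring

lemma integral_pow_mul_one_sub_pow_succ_mul_log (n b : ℕ) :
    ∫ x in (0:ℝ)..1, x ^ n * (1 - x) ^ (b + 1) * log x =
      (∫ x in (0:ℝ)..1, x ^ n * (1 - x) ^ b * log x) -
        ∫ x in (0:ℝ)..1, x ^ (n + 1) * (1 - x) ^ b * log x := by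
  rw [← integral_sub (intervalIntegrable_pow_mul_one_sub_pow_mul_log n b)
    (intervalIntegrable_pow_mul_one_sub_pow_mul_log (n + 1) b)]
  congr 1 with x
  ring

theorem integral_pow_mul_one_sub_pow_mul_log (n b : ℕ) :
    ∫ x in (0:ℝ)..1, x ^ n * (1 - x) ^ b * log x =
      (n.factorial * b.factorial / (n + b + 1).factorial : ℝ) * (xi n - xi (n + b + 1)) := by
  induction b generalizing n with
  | zero =>
    simp only [pow_zero, mul_one, integral_pow_mul_log, add_zero, xi_succ, Nat.factorial_succ]
    push_cast
    field_simp
    ring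
  | succ b ih =>
    rw [integral_pow_mul_one_sub_pow_succ_mul_log, ih, ih, show n + 1 + b + 1 = n + b + 1 + 1 by ring,
      show n + (b + 1) + 1 = n + b + 1 + 1 by ring]
    simp only [xi_succ, Nat.factorial_succ]
    push_cast
    field_simp
    ring

/-- for a random variable `W` with the Beta(l, m) density
`f(x) = ((l+m−1)!/((l−1)!(m−1)!))·x^{l−1}(1−x)^{m−1}` on `[0,1]`,
`E(W log W) = ((l+m−1)!/((l−1)!(m−1)!))·∫₀¹ x^l (1−x)^{m−1} log x dx
            = −(l/(l+m))·(ξ_{l+m} − ξ_l)`. -/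
theorem beta_expectation_W_logW (l m : ℕ) (hl : 1 ≤ l) (hm : 1 ≤ m) :
    (∫ x in (0:ℝ)..1, (x * Real.log x) *
        (((l + m - 1).factorial : ℝ) / ((l - 1).factorial * (m - 1).factorial) *
          x ^ (l - 1) * (1 - x) ^ (m - 1))) =
      ((l + m - 1).factorial : ℝ) / ((l - 1).factorial * (m - 1).factorial) *
        ∫ x in (0:ℝ)..1, x ^ l * (1 - x) ^ (m - 1) * Real.log x ∧
    (∫ x in (0:ℝ)..1, (x * Real.log x) *
        (((l + m - 1).factorial : ℝ) / ((l - 1).factorial * (m - 1).factorial) *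
          x ^ (l - 1) * (1 - x) ^ (m - 1))) =
      -((l : ℝ) / ((l : ℝ) + (m : ℝ))) * (xi (l + m) - xi l) := by
  obtain ⟨n, rfl⟩ : ∃ n, l = n + 1 := ⟨l - 1, by omega⟩
  obtain ⟨b, rfl⟩ : ∃ b, m = b + 1 := ⟨m - 1, by omega⟩
  simp only [Nat.add_sub_cancel, show n + 1 + (b + 1) - 1 = n + b + 1 by omega]
  have h_expect (C : ℝ) : ∫ x in (0:ℝ)..1, x * log x * (C * x ^ n * (1 - x) ^ b) =
      C * ∫ x in (0:ℝ)..1, x ^ (n + 1) * (1 - x) ^ b * log x := by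
    rw [← integral_const_mul]
    congr 1 with x
    ring
  refine ⟨h_expect _, ?_⟩
  rw [h_expect, integral_pow_mul_one_sub_pow_mul_log, show n + 1 + (b + 1) = n + b + 1 + 1 by ring,
    show n + 1 + b + 1 = n + b + 1 + 1 by ring]
  rw [Nat.factorial_succ n, Nat.factorial_succ (n + b + 1)]
  push_cast
  field_simp
  ring
end

section
/- Let I be a finite set of 61 elements and α a partition of I into 20 atoms consisting of 2 atoms of size 1, 9 atoms of size 2, 1 atom of size 3, 5 atoms of size 4, and 3 atoms of size 6 (the amino acid partition of the 61 coding codons under the standard genetic code). Let q = (q_A : A ∈ α) be a probability vector with 0 < q_A < e⁻¹ for all A ∈ α, and let P be the random extension of q built by normalizing independent rate-1 exponential random variables within each atom (P_i = q_A·G_i/Σ_{j∈A}G_j for i ∈ A). Let Δ = Σ_{A∈α} q_A·log|A| + Σ_{i∈I} P_i·log(P_i/q_{A^i}). Then for all λ > 0, P(Δ ≤ E(Δ) − λ) ≤ exp(−λ²/(2·z(q))), where z(q) = Σ_{A: |A|∈{2,3}} G(A,1)² + 2·Σ_{A: |A|∈{4,6}} G(A,1)² + Σ_{A: |A|∈{3,4}}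 G(A,2)² + 2·Σ_{A: |A|=6} G(A,2)² + Σ_{A: |A|=6} G(A,3)², with G(A,t) = q_A·log t + log 2 − q_A·log q_A. -/
/-!
Since `0 ≤ P_i ≤ q_A` on each atom `A` and `Σ_{i ∈ A} P_i = q_A`, every term `P_i log (P_i / q_A)`
lies between `P_i - q_A` and `0`, so almost surely `Δ - Σ_A q_A log |A|` lies in
`[-Σ_A (|A| - 1) q_A, 0] ⊆ [-5, 0]`, all atoms having at most six codons. Hoeffding's lemma for a
variable confined to an interval of length `5` gives the sub-Gaussian tail with proxy `25/4`, and
`z(q) ≥ 19 (log 2)² > 25/4` because `G(A, t) ≥ log 2` whenever `0 ≤ q_A ≤ 1`.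
-/

open Finset MeasureTheory ProbabilityTheory

/-- `α` is a partition of the finite set `I`: atoms are nonempty, pairwise
disjoint, and cover `I`. -/
def IsPartition {I : Type*} [Fintype I] [DecidableEq I] (α : Finset (Finset I)) : Prop :=
  (∀ A ∈ α, A.Nonempty) ∧
  (∀ A ∈ α, ∀ A' ∈ α, A ≠ A' → Disjoint A A') ∧
  (∀ i : I, ∃ A ∈ α, i ∈ A)

/-- `G(A, t) = q_A·log t + log 2 − q_A·log q_A`. -/
noncomputable def Gfun {I : Type*} [Fintype I] [DecidableEq I]
    (q : Finset I → ℝ) (A : Finset I) (t : ℕ) : ℝ :=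
  q A * Real.log (t : ℝ) + Real.log 2 - q A * Real.log (q A)

open Real Set

lemma sub_le_mul_log_div {p q : ℝ} (hp : 0 ≤ p) (hq : 0 < q) : p - q ≤ p * log (p / q) := by
  rcases hp.eq_or_lt with rfl | hp
  · simpa using hq.le
  have h := one_sub_inv_le_log_of_pos (div_pos hp hq)
  rw [inv_div] at h
  calc p - q = p * (1 - q / p) := by field_simp
    _ ≤ p * log (p / q) := mul_le_mul_of_nonneg_left h hp.le

lemma mul_log_div_nonpos {p q : ℝ} (hp : 0 ≤ p) (hpq : p ≤ q) : p * log (p / q) ≤ 0 :=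
  mul_nonpos_of_nonneg_of_nonpos hp
    (log_nonpos (div_nonneg hp (hp.trans hpq)) (div_le_one_of_le₀ hpq (hp.trans hpq)))

lemma sum_mul_log_div_mem_Icc {ι : Type*} (A : Finset ι) {q : ℝ} (hq : 0 < q) {p : ι → ℝ}
    (hp : ∀ i ∈ A, 0 ≤ p i) (hsum : ∑ i ∈ A, p i = q) :
    ∑ i ∈ A, p i * log (p i / q) ∈ Icc (-(((#A : ℝ) - 1) * q)) 0 := by
  constructor
  · calc -(((#A : ℝ) - 1) * q) = ∑ i ∈ A, (p i - q) := by
          rw [sum_sub_distrib, hsum, sum_const, nsmul_eq_mul]; ring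
      _ ≤ _ := sum_le_sum fun i hi => sub_le_mul_log_div (hp i hi) hq
  · exact sum_nonpos fun i hi => mul_log_div_nonpos (hp i hi) (hsum ▸ single_le_sum hp hi)

lemma forall_mem_mem_of_sum_card_filter_eq {ι β : Type*} [DecidableEq β] {s : Finset ι}
    {f : ι → β} {t : Finset β} (h : ∑ b ∈ t, #{a ∈ s | f a = b} = #s) : ∀ a ∈ s, f a ∈ t := by
  refine filter_card_eq ?_
  rw [card_eq_sum_card_fiberwise (s := {a ∈ s | f a ∈ t}) (f := f) (t := t)
    fun a ha => (mem_filter.1 ha).2, ← h]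
  refine sum_congr rfl fun b hb => ?_
  rw [filter_filter]
  exact congrArg card (filter_congr fun a _ => ⟨And.right, fun hab => ⟨hab ▸ hb, hab⟩⟩)

lemma card_mul_sq_le_sum_sq {ι : Type*} {s : Finset ι} {f : ι → ℝ} {c : ℝ} (hc : 0 ≤ c)
    (hf : ∀ i ∈ s, c ≤ f i) : #s * c ^ 2 ≤ ∑ i ∈ s, f i ^ 2 := by
  simpa using card_nsmul_le_sum s (fun i => f i ^ 2) (c ^ 2)
    fun i hi => pow_le_pow_left₀ hc (hf i hi) 2

section Partition

variable {I : Type*} [Fintype I] [DecidableEq I] {α : Finset (Finset I)}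

lemma IsPartition.eq_of_mem_of_mem (hα : IsPartition α) {A B : Finset I} (hA : A ∈ α)
    (hB : B ∈ α) {i : I} (hiA : i ∈ A) (hiB : i ∈ B) : A = B := by
  by_contra hAB
  exact disjoint_left.mp (hα.2.1 A hA B hB hAB) hiA hiB

lemma IsPartition.sum_univ_eq_sum_sum (hα : IsPartition α) {M : Type*} [AddCommMonoid M]
    (f : I → M) : ∑ i, f i = ∑ A ∈ α, ∑ i ∈ A, f i := by
  have huniv : α.biUnion id = Finset.univ := eq_univ_of_forall fun i => by
    obtain ⟨A, hA, hi⟩ := hα.2.2 i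
    exact mem_biUnion.2 ⟨A, hA, hi⟩
  rw [← huniv, sum_biUnion (t := id) fun A hA B hB hAB => hα.2.1 A hA B hB hAB]
  rfl

variable {atα : I → Finset I}

lemma IsPartition.sum_mul_div_sum_atom (hα : IsPartition α)
    (hatα : ∀ i, atα i ∈ α ∧ i ∈ atα i) {g : I → ℝ} (hg : ∀ i, 0 < g i) (q : Finset I → ℝ)
    {A : Finset I} (hA : A ∈ α) : ∑ i ∈ A, q (atα i) * g i / ∑ j ∈ atα i, g j = q A := by
  have hat : ∀ i ∈ A, atα i = A := fun i hi => hα.eq_of_mem_of_mem (hatα i).1 hA (hatα i).2 hi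
  rw [sum_congr rfl fun i hi => by rw [hat i hi], ← sum_div, ← mul_sum,
    mul_div_cancel_right₀ _ (sum_pos (fun j _ => hg j) (hα.1 A hA)).ne']

lemma IsPartition.sum_mul_log_div_mem_Icc (hα : IsPartition α)
    (hatα : ∀ i, atα i ∈ α ∧ i ∈ atα i) {q : Finset I → ℝ} (hq : ∀ A ∈ α, 0 < q A)
    {p : I → ℝ} (hp : ∀ i, 0 ≤ p i) (hsum : ∀ A ∈ α, ∑ i ∈ A, p i = q A) :
    ∑ i, p i * log (p i / q (atα i)) ∈ Icc (-∑ A ∈ α, ((#A : ℝ) - 1) * q A) 0 := by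
  have hatom : ∀ A ∈ α,
      ∑ i ∈ A, p i * log (p i / q (atα i)) = ∑ i ∈ A, p i * log (p i / q A) :=
    fun A hA => sum_congr rfl fun i hi => by
      rw [hα.eq_of_mem_of_mem (hatα i).1 hA (hatα i).2 hi]
  have hbound A (hA : A ∈ α) :=
    _root_.sum_mul_log_div_mem_Icc A (hq A hA) (fun i _ => hp i) (hsum A hA)
  rw [hα.sum_univ_eq_sum_sum, sum_congr rfl hatom, ← sum_neg_distrib]
  exact ⟨sum_le_sum fun A hA => (hbound A hA).1, sum_nonpos fun A hA => (hbound A hA).2⟩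

lemma IsPartition.extension_sum_mul_log_div_mem_Icc (hα : IsPartition α)
    (hatα : ∀ i, atα i ∈ α ∧ i ∈ atα i) {q : Finset I → ℝ} (hq : ∀ A ∈ α, 0 < q A)
    {g p : I → ℝ} (hg : ∀ i, 0 < g i) (hp : ∀ i, p i = q (atα i) * g i / ∑ j ∈ atα i, g j) :
    ∑ i, p i * log (p i / q (atα i)) ∈ Icc (-∑ A ∈ α, ((#A : ℝ) - 1) * q A) 0 := by
  refine hα.sum_mul_log_div_mem_Icc hatα hq (fun i => ?_) fun A hA => ?_
  · rw [hp]
    exact div_nonneg (mul_nonneg (hq _ (hatα i).1).le (hg i).le) (sum_nonneg fun j _ => (hg j).le)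
  · simp_rw [hp]
    exact hα.sum_mul_div_sum_atom hatα hg q hA

end Partition

lemma sum_card_sub_one_mul_le {ι : Type*} {s : Finset (Finset ι)} {q : Finset ι → ℝ} {n : ℕ}
    (hcard : ∀ A ∈ s, #A ≤ n + 1) (hq0 : ∀ A ∈ s, 0 ≤ q A) (hq1 : ∑ A ∈ s, q A = 1) :
    ∑ A ∈ s, ((#A : ℝ) - 1) * q A ≤ n := by
  calc ∑ A ∈ s, ((#A : ℝ) - 1) * q A ≤ ∑ A ∈ s, n * q A := sum_le_sum fun A hA =>
        mul_le_mul_of_nonneg_right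
          (by linarith [show (#A : ℝ) ≤ n + 1 by exact_mod_cast hcard A hA]) (hq0 A hA)
    _ = n := by rw [← mul_sum, hq1, mul_one]

lemma log_two_le_Gfun {I : Type*} [Fintype I] [DecidableEq I] {q : Finset I → ℝ}
    {A : Finset I} (hq0 : 0 ≤ q A) (hq1 : q A ≤ 1) (t : ℕ) : log 2 ≤ Gfun q A t := by
  have := mul_nonneg hq0 (Real.log_natCast_nonneg t)
  have := mul_log_nonpos hq0 hq1
  unfold Gfun
  linarith

lemma card_mul_sq_log_two_le_sum_Gfun_sq {I : Type*} [Fintype I] [DecidableEq I]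
    {q : Finset I → ℝ} {s : Finset (Finset I)} (hq : ∀ A ∈ s, 0 ≤ q A ∧ q A ≤ 1) (t : ℕ) :
    #s * log 2 ^ 2 ≤ ∑ A ∈ s, Gfun q A t ^ 2 :=
  card_mul_sq_le_sum_sq (log_nonneg one_le_two) fun A hA =>
    log_two_le_Gfun (hq A hA).1 (hq A hA).2 t

noncomputable def codonVarianceProxy {I : Type*} [Fintype I] [DecidableEq I]
    (α : Finset (Finset I)) (q : Finset I → ℝ) : ℝ :=
  (∑ A ∈ α.filter (fun A => A.card = 2 ∨ A.card = 3), (Gfun q A 1) ^ 2) +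
    2 * (∑ A ∈ α.filter (fun A => A.card = 4 ∨ A.card = 6), (Gfun q A 1) ^ 2) +
    (∑ A ∈ α.filter (fun A => A.card = 3 ∨ A.card = 4), (Gfun q A 2) ^ 2) +
    2 * (∑ A ∈ α.filter (fun A => A.card = 6), (Gfun q A 2) ^ 2) +
    (∑ A ∈ α.filter (fun A => A.card = 6), (Gfun q A 3) ^ 2)

lemma twentyFive_le_four_mul_codonVarianceProxy {I : Type*} [Fintype I] [DecidableEq I]
    {α : Finset (Finset I)} {q : Finset I → ℝ} (hq : ∀ A ∈ α, 0 ≤ q A ∧ q A ≤ 1)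
    (h2 : 9 ≤ #{A ∈ α | A.card = 2}) (h4 : 5 ≤ #{A ∈ α | A.card = 4}) :
    25 ≤ 4 * codonVarianceProxy α q := by
  have hsum_ge (p : Finset I → Prop) [DecidablePred p] (n : ℕ) (hn : n ≤ #{A ∈ α | p A})
      (t : ℕ) : n * log 2 ^ 2 ≤ ∑ A ∈ α with p A, Gfun q A t ^ 2 :=
    (mul_le_mul_of_nonneg_right (by exact_mod_cast hn) (sq_nonneg _)).trans
      (card_mul_sq_log_two_le_sum_Gfun_sq (fun A hA => hq A (mem_filter.1 hA).1) t)
  have h23 := hsum_ge (fun A => A.card = 2 ∨ A.card = 3) 9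
    (h2.trans (card_le_card (monotone_filter_right α fun _ _ => Or.inl))) 1
  have h46 := hsum_ge (fun A => A.card = 4 ∨ A.card = 6) 5
    (h4.trans (card_le_card (monotone_filter_right α fun _ _ => Or.inl))) 1
  rw [Nat.cast_ofNat] at h23 h46
  have := Real.log_two_gt_d9
  unfold codonVarianceProxy
  nlinarith [sum_nonneg fun A (_ : A ∈ α.filter fun A => A.card = 3 ∨ A.card = 4) =>
      sq_nonneg (Gfun q A 2),
    sum_nonneg fun A (_ : A ∈ α.filter fun A => A.card = 6) => sq_nonneg (Gfun q A 2),
    sum_nonneg fun A (_ : A ∈ α.filter fun A => A.card = 6) => sq_nonneg (Gfun q A 3)]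

lemma expMeasure_Iic_zero {r : ℝ} (hr : 0 < r) : expMeasure r (Iic 0) = 0 := by
  have := isProbabilityMeasure_expMeasure hr
  rw [← measureReal_eq_zero_iff, ← cdf_eq_real, cdf_expMeasure_eq hr]
  simp

lemma ae_pos_of_map_eq_expMeasure {Ω : Type*} [MeasurableSpace Ω] {μ : Measure Ω}
    {X : Ω → ℝ} (hX : Measurable X) {r : ℝ} (hr : 0 < r) (hmap : μ.map X = expMeasure r) :
    ∀ᵐ ω ∂μ, 0 < X ω := by
  refine ae_of_ae_map hX.aemeasurable ?_
  rw [hmap, ae_iff]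
  exact measure_mono_null (fun x hx => not_lt.mp hx) (expMeasure_Iic_zero hr)

lemma measureReal_le_integral_sub_le_of_mem_Icc {Ω : Type*} [MeasurableSpace Ω]
    {μ : Measure Ω} [IsProbabilityMeasure μ] {X : Ω → ℝ} (hX : AEMeasurable X μ) {a b z ε : ℝ}
    (hXab : ∀ᵐ ω ∂μ, X ω ∈ Icc a b) (hz : (b - a) ^ 2 ≤ 4 * z) (hε : 0 ≤ ε) :
    μ.real {ω | X ω ≤ μ[X] - ε} ≤ exp (-ε ^ 2 / (2 * z)) := by
  have hz0 : 0 ≤ z := by nlinarith [sq_nonneg (b - a)]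
  -- widening `[a, b]` to an interval of length `2 √z` makes Hoeffding's proxy exactly `z`
  have hb : b - a ≤ 2 * √z :=
    (abs_le_of_sq_le_sq' (by rw [mul_pow, Real.sq_sqrt hz0]; linarith) (by positivity)).2
  have hneg : ∀ᵐ ω ∂μ, -X ω ∈ Icc (-(a + 2 * √z)) (-a) := by
    filter_upwards [hXab] with ω hω
    exact ⟨by linarith [hω.2], by linarith [hω.1]⟩
  have h := (hasSubgaussianMGF_of_mem_Icc hX.neg hneg).measure_ge_le hε
  have hproxy : (((‖-a - -(a + 2 * √z)‖₊ / 2) ^ 2 : NNReal) : ℝ) = z := by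
    push_cast
    rw [show -a - -(a + 2 * √z) = 2 * √z by ring, Real.norm_eq_abs,
      abs_of_nonneg (by positivity), mul_div_cancel_left₀ _ two_ne_zero, Real.sq_sqrt hz0]
  rw [hproxy] at h
  convert h using 3
  ext ω
  simp only [Pi.neg_apply, integral_neg]
  constructor <;> intro h <;> linarith

theorem azuma_hoeffding_codons_general
    {I : Type*} [Fintype I] [DecidableEq I]
    {Ω : Type*} [MeasurableSpace Ω] (μ : Measure Ω) [IsProbabilityMeasure μ]
    (α : Finset (Finset I)) (hα : IsPartition α) (hα20 : α.card = 20)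
    (h1 : (α.filter (fun A => A.card = 1)).card = 2)
    (h2 : (α.filter (fun A => A.card = 2)).card = 9)
    (h3 : (α.filter (fun A => A.card = 3)).card = 1)
    (h4 : (α.filter (fun A => A.card = 4)).card = 5)
    (h6 : (α.filter (fun A => A.card = 6)).card = 3)
    (q : Finset I → ℝ)
    (hq0 : ∀ A ∈ α, 0 < q A)
    (hq1 : ∑ A ∈ α, q A = 1)
    (atα : I → Finset I) (hatα : ∀ i : I, atα i ∈ α ∧ i ∈ atα i)
    (G : I → Ω → ℝ) (hGmeas : ∀ i, Measurable (G i))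
    (hGexp : ∀ i, Measure.map (G i) μ = expMeasure 1)
    (P : I → Ω → ℝ)
    (hP : ∀ i : I, ∀ ω, P i ω = q (atα i) * G i ω / (∑ j ∈ atα i, G j ω))
    (Δ : Ω → ℝ)
    (hΔ : ∀ ω, Δ ω = ∑ A ∈ α, q A * Real.log (A.card : ℝ) +
      ∑ i : I, P i ω * Real.log (P i ω / q (atα i)))
    (z : ℝ)
    (hz : z = (∑ A ∈ α.filter (fun A => A.card = 2 ∨ A.card = 3), (Gfun q A 1) ^ 2) +
      2 * (∑ A ∈ α.filter (fun A => A.card = 4 ∨ A.card = 6), (Gfun q A 1) ^ 2) +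
      (∑ A ∈ α.filter (fun A => A.card = 3 ∨ A.card = 4), (Gfun q A 2) ^ 2) +
      2 * (∑ A ∈ α.filter (fun A => A.card = 6), (Gfun q A 2) ^ 2) +
      (∑ A ∈ α.filter (fun A => A.card = 6), (Gfun q A 3) ^ 2))
    (lam : ℝ) (hlam : 0 < lam) :
    μ {ω | Δ ω ≤ (∫ ω', Δ ω' ∂μ) - lam} ≤
      ENNReal.ofReal (Real.exp (-(lam ^ 2) / (2 * z))) := by
  set c := ∑ A ∈ α, q A * Real.log (A.card : ℝ)
  have hq01 A (hA : A ∈ α) : 0 ≤ q A ∧ q A ≤ 1 :=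
    ⟨(hq0 A hA).le, hq1 ▸ single_le_sum (fun B hB => (hq0 B hB).le) hA⟩
  have hcard A (hA : A ∈ α) : A.card ∈ ({1, 2, 3, 4, 6} : Finset ℕ) :=
    forall_mem_mem_of_sum_card_filter_eq (by simp [h1, h2, h3, h4, h6, hα20]) A hA
  have hwidth : ∑ A ∈ α, ((#A : ℝ) - 1) * q A ≤ 5 :=
    sum_card_sub_one_mul_le (n := 5) (fun A hA => by
      have := hcard A hA
      simp only [Finset.mem_insert, Finset.mem_singleton] at this
      omega) (fun A hA => (hq01 A hA).1) hq1
  have hΔ_mem : ∀ᵐ ω ∂μ, Δ ω ∈ Icc (c - 5) c := by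
    filter_upwards [ae_all_iff.2 fun i =>
      ae_pos_of_map_eq_expMeasure (hGmeas i) one_pos (hGexp i)] with ω hG
    have hS := hα.extension_sum_mul_log_div_mem_Icc hatα hq0 hG (hP · ω)
    rw [hΔ ω]
    exact ⟨by linarith [hS.1], by linarith [hS.2]⟩
  have hΔ_meas : Measurable Δ := by
    have hPmeas i : Measurable (P i) := by
      rw [show P i = _ from funext (hP i)]; fun_prop
    rw [show Δ = _ from funext hΔ]
    fun_prop
  have hz_ge : (c - (c - 5)) ^ 2 ≤ 4 * z := by
    rw [sub_sub_cancel, hz, show (5 : ℝ) ^ 2 = 25 by norm_num]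
    exact twentyFive_le_four_mul_codonVarianceProxy hq01 h2.ge h4.ge
  rw [← ENNReal.ofReal_toReal (measure_ne_top μ _)]
  exact ENNReal.ofReal_le_ofReal <| measureReal_le_integral_sub_le_of_mem_Icc
    hΔ_meas.aemeasurable hΔ_mem hz_ge hlam.le

/-- Corollary 4: for the amino acid partition of the 61 coding
codons (2 atoms of size 1, 9 of size 2, 1 of size 3, 5 of size 4, 3 of size 6),
a probability vector `q` with `0 < q_A < e⁻¹`, and `P` the random extension of
`q` built from independent rate-1 exponentials, for all `λ > 0`,
`ℙ(Δ ≤ E(Δ) − λ) ≤ exp(−λ²/(2 z(q)))`, where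
`z(q) = Σ_{|A|∈{2,3}} G(A,1)² + 2Σ_{|A|∈{4,6}} G(A,1)² + Σ_{|A|∈{3,4}} G(A,2)²
        + 2Σ_{|A|=6} G(A,2)² + Σ_{|A|=6} G(A,3)²`. -/
theorem azuma_hoeffding_codons
    {I : Type*} [Fintype I] [DecidableEq I] (hI : Fintype.card I = 61)
    {Ω : Type*} [MeasurableSpace Ω] (μ : Measure Ω) [IsProbabilityMeasure μ]
    (α : Finset (Finset I)) (hα : IsPartition α) (hα20 : α.card = 20)
    (h1 : (α.filter (fun A => A.card = 1)).card = 2)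
    (h2 : (α.filter (fun A => A.card = 2)).card = 9)
    (h3 : (α.filter (fun A => A.card = 3)).card = 1)
    (h4 : (α.filter (fun A => A.card = 4)).card = 5)
    (h6 : (α.filter (fun A => A.card = 6)).card = 3)
    (q : Finset I → ℝ)
    (hq0 : ∀ A ∈ α, 0 < q A) (hqe : ∀ A ∈ α, q A < (Real.exp 1)⁻¹)
    (hq1 : ∑ A ∈ α, q A = 1)
    (atα : I → Finset I) (hatα : ∀ i : I, atα i ∈ α ∧ i ∈ atα i)
    (G : I → Ω → ℝ) (hGmeas : ∀ i, Measurable (G i))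
    (hGindep : iIndepFun G μ)
    (hGexp : ∀ i, Measure.map (G i) μ = expMeasure 1)
    (P : I → Ω → ℝ)
    (hP : ∀ i : I, ∀ ω, P i ω = q (atα i) * G i ω / (∑ j ∈ atα i, G j ω))
    (Δ : Ω → ℝ)
    (hΔ : ∀ ω, Δ ω = ∑ A ∈ α, q A * Real.log (A.card : ℝ) +
      ∑ i : I, P i ω * Real.log (P i ω / q (atα i)))
    (z : ℝ)
    (hz : z = (∑ A ∈ α.filter (fun A => A.card = 2 ∨ A.card = 3), (Gfun q A 1) ^ 2) +
      2 * (∑ A ∈ α.filter (fun A => A.card = 4 ∨ A.card = 6), (Gfun q A 1) ^ 2) +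
      (∑ A ∈ α.filter (fun A => A.card = 3 ∨ A.card = 4), (Gfun q A 2) ^ 2) +
      2 * (∑ A ∈ α.filter (fun A => A.card = 6), (Gfun q A 2) ^ 2) +
      (∑ A ∈ α.filter (fun A => A.card = 6), (Gfun q A 3) ^ 2))
    (lam : ℝ) (hlam : 0 < lam) :
    μ {ω | Δ ω ≤ (∫ ω', Δ ω' ∂μ) - lam} ≤
      ENNReal.ofReal (Real.exp (-(lam ^ 2) / (2 * z))) :=
  azuma_hoeffding_codons_general μ α hα hα20 h1 h2 h3 h4 h6 q hq0 hq1 atα hatα G hGmeas hGexp P hP Δ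
    hΔ z hz lam hlam
end
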